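/- Let F be an abelian subgroup of G = PU(n) ⋊ ⟨τ₀⟩ not contained in PU(n), let H_F = F ∩ PU(n) with commutator pairing m and ker m = {x ∈ H_F : m(x,y) = 1 for all y ∈ H_F}, and let π : U(n) → PU(n) be the projection. Fix u = ([C], τ₀) ∈ F \ PU(n) with C ∈ U(n). Then: (i) for every A ∈ π⁻¹(ker m) there is a unique ν(A) ∈ U(1) with C·Ā·C⁻¹ = ν(A)·A, the resulting map ν : π⁻¹(ker m) → U(1) is a group homomorphism, and it does not depend on the choice of u ∈ F \ PU(n); (ii) π restricts to a group isomorphism from ker ν/⟨−I_n⟩ onto ker m. -/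

import Mathlib

open Matrix

noncomputable section

/-- The unitary group `U(ι)` of complex unitary matrices indexed by `ι`. -/
abbrev UG (ι : Type) [Fintype ι] [DecidableEq ι] := Matrix.unitaryGroup ι ℂ

variable (ι : Type) [Fintype ι] [DecidableEq ι]

/-- The central subgroup `Z_n = {λ I : |λ| = 1}` of scalar unitary matrices. -/
def scalarSG : Subgroup (UG ι) where
  carrier := {A | ∃ c : ℂ, ‖c‖ = 1 ∧ (A : Matrix ι ι ℂ) = c • (1 : Matrix ι ι ℂ)}
  one_mem' := ⟨1, by simp, by simp⟩
  mul_mem' := by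
    rintro A B ⟨a, ha, hA⟩ ⟨b, hb, hB⟩
    exact ⟨a * b, by simp [ha, hb], by
      simp only [Matrix.UnitaryGroup.mul_val, hA, hB, smul_mul_smul_comm, mul_one]⟩
  inv_mem' := by
    rintro A ⟨a, ha, hA⟩
    refine ⟨star a, by simpa using ha, ?_⟩
    have : ((A⁻¹ : UG ι) : Matrix ι ι ℂ) = star (A : Matrix ι ι ℂ) :=
      Matrix.UnitaryGroup.inv_val A
    rw [this, hA]
    simp [Matrix.star_eq_conjTranspose, Matrix.conjTranspose_smul]

instance scalarSG_normal : (scalarSG ι).Normal := by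
  constructor
  rintro A ⟨a, ha, hA⟩ g
  refine ⟨a, ha, ?_⟩
  have h1 : ((g * A * g⁻¹ : UG ι) : Matrix ι ι ℂ)
      = (g : Matrix ι ι ℂ) * (A : Matrix ι ι ℂ) * ((g⁻¹ : UG ι) : Matrix ι ι ℂ) := rfl
  rw [h1, hA]
  have h2 : (g : Matrix ι ι ℂ) * ((g⁻¹ : UG ι) : Matrix ι ι ℂ) = 1 := by
    have := Matrix.UnitaryGroup.mul_val g g⁻¹
    rw [mul_inv_cancel] at this
    simpa using this.symm
  calc (g : Matrix ι ι ℂ) * (a • (1 : Matrix ι ι ℂ)) * ((g⁻¹ : UG ι) : Matrix ι ι ℂ)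
      = a • ((g : Matrix ι ι ℂ) * ((g⁻¹ : UG ι) : Matrix ι ι ℂ)) := by
        simp [mul_smul_comm, smul_mul_assoc]
    _ = a • (1 : Matrix ι ι ℂ) := by rw [h2]

/-- The projective unitary group `PU(ι) = U(ι)/Z`. -/
abbrev PU := UG ι ⧸ scalarSG ι

variable {ι}

lemma conjTranspose_map_conj (A : Matrix ι ι ℂ) :
    (A.map (starRingEnd ℂ))ᴴ = Aᵀ := by
  ext i j
  simp [Matrix.conjTranspose_apply, Matrix.map_apply]

/-- Entrywise complex conjugation on the unitary group. -/
def conjUG (A : UG ι) : UG ι :=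
  ⟨(A : Matrix ι ι ℂ).map (starRingEnd ℂ), by
    rw [Matrix.mem_unitaryGroup_iff]
    have h1 : ((A : Matrix ι ι ℂ) * star (A : Matrix ι ι ℂ)).map (starRingEnd ℂ)
        = (A : Matrix ι ι ℂ).map (starRingEnd ℂ)
          * (star (A : Matrix ι ι ℂ)).map (starRingEnd ℂ) :=
      Matrix.map_mul
    have hA : (A : Matrix ι ι ℂ) * star (A : Matrix ι ι ℂ) = 1 :=
      Matrix.mem_unitaryGroup_iff.mp A.2
    rw [hA] at h1
    have h2 : ((1 : Matrix ι ι ℂ)).map (starRingEnd ℂ) = 1 := by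
      ext i j; simp [Matrix.map_apply, Matrix.one_apply, apply_ite]
    have h3 : star ((A : Matrix ι ι ℂ).map (starRingEnd ℂ))
        = (star (A : Matrix ι ι ℂ)).map (starRingEnd ℂ) := by
      ext i j
      simp [Matrix.star_eq_conjTranspose, Matrix.conjTranspose_apply, Matrix.map_apply]
    rw [h3, ← h1, h2]⟩

@[simp] lemma conjUG_conjUG (A : UG ι) : conjUG (conjUG A) = A := by
  apply Subtype.ext
  show ((A : Matrix ι ι ℂ).map (starRingEnd ℂ)).map (starRingEnd ℂ) = (A : Matrix ι ι ℂ)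
  ext i j
  simp [Matrix.map_apply]

/-- Entrywise complex conjugation as an automorphism of the unitary group. -/
def conjUGE : UG ι ≃* UG ι where
  toFun := conjUG
  invFun := conjUG
  left_inv := conjUG_conjUG
  right_inv := conjUG_conjUG
  map_mul' A B := by
    apply Subtype.ext
    show ((A * B : UG ι) : Matrix ι ι ℂ).map (starRingEnd ℂ)
        = (A : Matrix ι ι ℂ).map (starRingEnd ℂ) * (B : Matrix ι ι ℂ).map (starRingEnd ℂ)
    rw [Matrix.UnitaryGroup.mul_val]
    exact Matrix.map_mul

variable (ι)

lemma scalarSG_le_comap_conjUGE :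
    scalarSG ι ≤ (scalarSG ι).comap (conjUGE : UG ι ≃* UG ι).toMonoidHom := by
  rintro A ⟨a, ha, hA⟩
  refine ⟨starRingEnd ℂ a, by simpa using ha, ?_⟩
  show ((A : Matrix ι ι ℂ).map (starRingEnd ℂ)) = _
  rw [hA]
  ext i j
  by_cases h : i = j <;>
    simp [Matrix.map_apply, Matrix.smul_apply, Matrix.one_apply, h]

/-- The complex conjugation automorphism `τ₀` of `PU(ι)`. -/
def tauPU : PU ι ≃* PU ι where
  toFun := QuotientGroup.map (scalarSG ι) (scalarSG ι) (conjUGE : UG ι ≃* UG ι).toMonoidHom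
    (scalarSG_le_comap_conjUGE ι)
  invFun := QuotientGroup.map (scalarSG ι) (scalarSG ι) (conjUGE : UG ι ≃* UG ι).toMonoidHom
    (scalarSG_le_comap_conjUGE ι)
  left_inv := by
    intro x
    induction x using QuotientGroup.induction_on with
    | H A => rw [QuotientGroup.map_mk, QuotientGroup.map_mk]
             exact congrArg _ (conjUG_conjUG A)
  right_inv := by
    intro x
    induction x using QuotientGroup.induction_on with
    | H A => rw [QuotientGroup.map_mk, QuotientGroup.map_mk]
             exact congrArg _ (conjUG_conjUG A)
  map_mul' := map_mul _


end

noncomputable section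

variable (ι : Type) [Fintype ι] [DecidableEq ι]

lemma tauPU_mul_tauPU : (tauPU ι) * (tauPU ι) = 1 :=
  DFunLike.ext _ _ fun x => by
    rw [MulAut.mul_apply, MulAut.one_apply]
    exact (tauPU ι).left_inv x

/-- The action of `⟨τ₀⟩ ≅ ℤ/2ℤ` on `PU(ι)` by complex conjugation. -/
def actPU : Multiplicative (ZMod 2) →* MulAut (PU ι) where
  toFun x := (tauPU ι) ^ (Multiplicative.toAdd x).val
  map_one' := by
    show (tauPU ι) ^ (Multiplicative.toAdd (1 : Multiplicative (ZMod 2))).val = 1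
    simp
  map_mul' a b := by
    show (tauPU ι) ^ (Multiplicative.toAdd (a * b)).val
        = (tauPU ι) ^ (Multiplicative.toAdd a).val * (tauPU ι) ^ (Multiplicative.toAdd b).val
    have h2 : (tauPU ι) ^ 2 = 1 := by rw [pow_two]; exact tauPU_mul_tauPU ι
    have hab : (Multiplicative.toAdd (a * b))
        = Multiplicative.toAdd a + Multiplicative.toAdd b := rfl
    rw [hab, ZMod.val_add, ← pow_eq_pow_mod _ h2, pow_add]

/-- The group `PU(ι) ⋊ ⟨τ₀⟩`. -/
abbrev GA := SemidirectProduct (PU ι) (Multiplicative (ZMod 2)) (actPU ι)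

end

/-- `x ∈ ker m` for the commutator pairing `m` on `H_F = F ∩ PU(n)`. -/
def inKerm (n : ℕ) (F : Subgroup (GA (Fin n))) (x : PU (Fin n)) : Prop :=
  SemidirectProduct.inl x ∈ F ∧
  ∀ y : PU (Fin n), SemidirectProduct.inl y ∈ F →
    ∀ A B : UG (Fin n), (QuotientGroup.mk A : PU (Fin n)) = x →
      (QuotientGroup.mk B : PU (Fin n)) = y →
      ((A * B * A⁻¹ * B⁻¹ : UG (Fin n)) : Matrix (Fin n) (Fin n) ℂ)
        = (1 : Matrix (Fin n) (Fin n) ℂ)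

/-!
Conjugation by `u = ([C], τ₀)` sends `[A]` to `[C Ā C⁻¹]`, so commutativity of `F` makes
`C Ā C⁻¹` a scalar multiple `ν(A) A` whenever `[A] ∈ H_F`, and `ν` is multiplicative because
`A ↦ C Ā C⁻¹` is. Another choice `u'` differs from `u` by some `[D] ∈ H_F`, which replaces `C` by
a scalar multiple of `C D̄`; for `[A] ∈ ker m` the matrices `A` and `D` commute, so `C Ā C⁻¹` is
unchanged. Finally `ν(sA) = s̄² ν(A)` for `|s| = 1`, so each fibre of `π` over `ker m` meets
`ker ν`, and does so exactly in a pair `±A`.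
-/

open SemidirectProduct

section

variable {ι : Type} [Fintype ι] [DecidableEq ι]

lemma mem_unitary_of_norm_eq_one {c : ℂ} (hc : ‖c‖ = 1) : c ∈ unitary ℂ := by
  rw [Unitary.mem_iff_self_mul_star, Complex.star_def, Complex.mul_conj', hc]
  norm_num

lemma eq_one_or_eq_neg_one_of_star_eq_self {c : ℂ} (hc : ‖c‖ = 1) (hstar : star c = c) :
    c = 1 ∨ c = -1 :=
  mul_self_eq_one_iff.mp <| by
    rw [← Unitary.mul_star_self_of_mem (mem_unitary_of_norm_eq_one hc), hstar]

lemma smul_left_injective_unitaryGroup [Nonempty ι] (A : UG ι) :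
    Function.Injective fun c : ℂ => c • (A : Matrix ι ι ℂ) :=
  smul_left_injective ℂ fun h => one_ne_zero <| by
    rw [← Matrix.mem_unitaryGroup_iff.mp A.2, h, zero_mul]

lemma unitaryGroup_coe_inv (C : UG ι) : ((C⁻¹ : UG ι) : Matrix ι ι ℂ) = (C : Matrix ι ι ℂ)⁻¹ :=
  (Matrix.inv_eq_right_inv (Matrix.mem_unitaryGroup_iff.mp C.2)).symm

lemma mk_eq_mk_iff_exists_smul {A B : UG ι} :
    (QuotientGroup.mk A : PU ι) = QuotientGroup.mk B ↔
      ∃ c : ℂ, ‖c‖ = 1 ∧ (B : Matrix ι ι ℂ) = c • (A : Matrix ι ι ℂ) := by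
  rw [QuotientGroup.eq]
  refine exists_congr fun c => and_congr_right fun _ => ?_
  change star (A : Matrix ι ι ℂ) * B = c • 1 ↔ _
  constructor
  · intro h
    rw [← one_mul (B : Matrix ι ι ℂ), ← Matrix.mem_unitaryGroup_iff.mp A.2, mul_assoc, h,
      mul_smul_comm, mul_one]
  · intro h
    rw [h, mul_smul_comm, Matrix.mem_unitaryGroup_iff'.mp A.2]

lemma exists_coe_eq_smul {c : ℂ} (hc : ‖c‖ = 1) (A : UG ι) :
    ∃ B : UG ι, (B : Matrix ι ι ℂ) = c • (A : Matrix ι ι ℂ) :=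
  ⟨⟨_, Unitary.smul_mem_of_mem (mem_unitary_of_norm_eq_one hc) A.2⟩, rfl⟩

lemma commute_of_mem_scalarSG {z : UG ι} (hz : z ∈ scalarSG ι) (g : UG ι) : Commute z g := by
  obtain ⟨c, -, hc⟩ := hz
  exact Subtype.ext <| by simp [hc]

/-- The conjugation action of `([C], τ₀) ∈ G` on `PU(n)`, lifted to `U(n)`. -/
def twistConj (C : UG ι) : UG ι ≃* UG ι := conjUGE.trans (MulAut.conj C)

lemma twistConj_apply (C A : UG ι) : twistConj C A = C * conjUG A * C⁻¹ := rfl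

lemma coe_twistConj (C A : UG ι) :
    (twistConj C A : Matrix ι ι ℂ)
      = (C : Matrix ι ι ℂ) * (A : Matrix ι ι ℂ).map (starRingEnd ℂ) * (C : Matrix ι ι ℂ)⁻¹ := by
  rw [twistConj_apply, UnitaryGroup.mul_val, UnitaryGroup.mul_val, unitaryGroup_coe_inv]
  rfl

lemma coe_twistConj_of_coe_eq_smul {C A B : UG ι} {c : ℂ}
    (h : (B : Matrix ι ι ℂ) = c • (A : Matrix ι ι ℂ)) :
    (twistConj C B : Matrix ι ι ℂ) = star c • (twistConj C A : Matrix ι ι ℂ) := by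
  rw [coe_twistConj, coe_twistConj, h, Matrix.map_smul' _ _ _ (map_mul _), mul_smul_comm,
    smul_mul_assoc]
  rfl

lemma coe_twistConj_mul_of_eq_smul {C A B : UG ι} {a b : ℂ}
    (hA : (twistConj C A : Matrix ι ι ℂ) = a • (A : Matrix ι ι ℂ))
    (hB : (twistConj C B : Matrix ι ι ℂ) = b • (B : Matrix ι ι ℂ)) :
    (twistConj C (A * B) : Matrix ι ι ℂ) = (a * b) • ((A * B : UG ι) : Matrix ι ι ℂ) := by
  rw [map_mul, UnitaryGroup.mul_val, hA, hB, smul_mul_smul_comm, UnitaryGroup.mul_val]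

lemma twistConj_eq_of_mk_eq {C C' : UG ι}
    (h : (QuotientGroup.mk C : PU ι) = QuotientGroup.mk C') (A : UG ι) :
    twistConj C' A = twistConj C A := by
  obtain ⟨z, hz, rfl⟩ : ∃ z ∈ scalarSG ι, C' = C * z := ⟨_, QuotientGroup.eq.mp h, by group⟩
  rw [twistConj_apply, twistConj_apply,
    show C * z * conjUG A * (C * z)⁻¹ = C * (z * conjUG A * z⁻¹) * C⁻¹ by group,
    (commute_of_mem_scalarSG hz _).mul_inv_cancel]

lemma twistConj_mul_conjUG_of_commute {D A : UG ι} (h : Commute D A) (C : UG ι) :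
    twistConj (C * conjUG D) A = twistConj C A := by
  have hconj : Commute (conjUG D) (conjUG A) := h.map (conjUGE : UG ι ≃* UG ι)
  rw [twistConj_apply, twistConj_apply,
    show C * conjUG D * conjUG A * (C * conjUG D)⁻¹
      = C * (conjUG D * conjUG A * (conjUG D)⁻¹) * C⁻¹ by group, hconj.mul_inv_cancel]

lemma tauPU_mk (A : UG ι) : tauPU ι (QuotientGroup.mk A) = QuotientGroup.mk (conjUG A) := rfl

lemma actPU_of_ne_one {r : Multiplicative (ZMod 2)} (hr : r ≠ 1) : actPU ι r = tauPU ι := by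
  obtain rfl : r = Multiplicative.ofAdd 1 := by revert r; decide
  exact pow_one _

lemma right_inv_mul_eq_one {u u' : GA ι} (hu : u.right ≠ 1) (hu' : u'.right ≠ 1) :
    (u⁻¹ * u').right = 1 := by
  rw [mul_right, inv_right]
  generalize u.right = r at hu
  generalize u'.right = r' at hu'
  revert r r'
  decide

lemma mul_inl_mk_eq {u : GA ι} (hur : u.right ≠ 1) {C : UG ι}
    (hC : (QuotientGroup.mk C : PU ι) = u.left) (A : UG ι) :
    u * inl (QuotientGroup.mk A) = inl (QuotientGroup.mk (twistConj C A)) * u := by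
  refine SemidirectProduct.ext ?_ (by simp)
  simp only [mul_left, left_inl, right_inl, map_one, MulAut.one_apply, actPU_of_ne_one hur, ← hC,
    tauPU_mk, twistConj_apply, QuotientGroup.mk_mul, QuotientGroup.mk_inv]
  group

lemma exists_coe_twistConj_eq_smul {u : GA ι} (hur : u.right ≠ 1) {C : UG ι}
    (hC : (QuotientGroup.mk C : PU ι) = u.left) {A : UG ι}
    (h : Commute u (inl (QuotientGroup.mk A))) :
    ∃ c : ℂ, ‖c‖ = 1 ∧ (twistConj C A : Matrix ι ι ℂ) = c • (A : Matrix ι ι ℂ) := by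
  have hconj : inl (QuotientGroup.mk (twistConj C A)) * u = inl (QuotientGroup.mk A) * u :=
    (mul_inl_mk_eq hur hC A).symm.trans h.eq
  exact mk_eq_mk_iff_exists_smul.mp (inl_injective (mul_right_cancel hconj)).symm

open scoped Classical in
/-- The scalar `ν(A)` with `C Ā C⁻¹ = ν(A) A`, and the junk value `1` when there is none. -/
noncomputable def nu (C A : UG ι) : ℂ :=
  if h : ∃ c : ℂ, (twistConj C A : Matrix ι ι ℂ) = c • (A : Matrix ι ι ℂ) then h.choose else 1

lemma nu_eq_of_coe_twistConj_eq_smul [Nonempty ι] {C A : UG ι} {c : ℂ}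
    (h : (twistConj C A : Matrix ι ι ℂ) = c • (A : Matrix ι ι ℂ)) : nu C A = c := by
  have hex : ∃ c : ℂ, (twistConj C A : Matrix ι ι ℂ) = c • (A : Matrix ι ι ℂ) := ⟨c, h⟩
  rw [nu, dif_pos hex]
  exact smul_left_injective_unitaryGroup A (hex.choose_spec.symm.trans h)

lemma nu_mul [Nonempty ι] {C A B : UG ι} {a b : ℂ}
    (hA : (twistConj C A : Matrix ι ι ℂ) = a • (A : Matrix ι ι ℂ))
    (hB : (twistConj C B : Matrix ι ι ℂ) = b • (B : Matrix ι ι ℂ)) :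
    nu C (A * B) = nu C A * nu C B := by
  rw [nu_eq_of_coe_twistConj_eq_smul (coe_twistConj_mul_of_eq_smul hA hB),
    nu_eq_of_coe_twistConj_eq_smul hA, nu_eq_of_coe_twistConj_eq_smul hB]

lemma exists_mk_eq_and_nu_eq_one [Nonempty ι] {C A : UG ι} {c : ℂ} (hc : ‖c‖ = 1)
    (h : (twistConj C A : Matrix ι ι ℂ) = c • (A : Matrix ι ι ℂ)) :
    ∃ B : UG ι, (QuotientGroup.mk B : PU ι) = QuotientGroup.mk A ∧ nu C B = 1 := by
  obtain ⟨s, hs⟩ := IsAlgClosed.exists_pow_nat_eq c two_pos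
  have hs1 : ‖s‖ = 1 := by
    rwa [← pow_left_inj₀ (norm_nonneg s) zero_le_one two_ne_zero, one_pow, ← norm_pow, hs]
  obtain ⟨B, hB⟩ := exists_coe_eq_smul hs1 A
  refine ⟨B, (mk_eq_mk_iff_exists_smul.mpr ⟨s, hs1, hB⟩).symm,
    nu_eq_of_coe_twistConj_eq_smul ?_⟩
  rw [coe_twistConj_of_coe_eq_smul hB, h, ← hs, smul_smul, one_smul, hB, pow_two, ← mul_assoc,
    Unitary.star_mul_self_of_mem (mem_unitary_of_norm_eq_one hs1), one_mul]

lemma eq_or_coe_eq_neg_of_mk_eq [Nonempty ι] {C A B : UG ι}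
    (hA : (twistConj C A : Matrix ι ι ℂ) = A) (hB : (twistConj C B : Matrix ι ι ℂ) = B)
    (h : (QuotientGroup.mk A : PU ι) = QuotientGroup.mk B) :
    A = B ∨ (A : Matrix ι ι ℂ) = -(B : Matrix ι ι ℂ) := by
  obtain ⟨s, hs1, hBs⟩ := mk_eq_mk_iff_exists_smul.mp h
  have hstar : star s = s := smul_left_injective_unitaryGroup A <|
    calc star s • (A : Matrix ι ι ℂ) = star s • (twistConj C A : Matrix ι ι ℂ) := by rw [hA]
      _ = B := (coe_twistConj_of_coe_eq_smul hBs).symm.trans hB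
      _ = s • A := hBs
  rcases eq_one_or_eq_neg_one_of_star_eq_self hs1 hstar with rfl | rfl
  · exact Or.inl (Subtype.ext (by rw [hBs, one_smul]))
  · exact Or.inr (by rw [hBs, neg_one_smul, neg_neg])

end

section

variable {n : ℕ} {F : Subgroup (GA (Fin n))}

lemma commute_of_inKerm {A D : UG (Fin n)} (hA : inKerm n F (QuotientGroup.mk A))
    (hD : inl (QuotientGroup.mk D) ∈ F) : Commute A D :=
  commutatorElement_eq_one_iff_commute.mp (Subtype.ext (hA.2 _ hD A D rfl rfl))

lemma twistConj_eq_of_inKerm {u u' : GA (Fin n)} (hu : u ∈ F) (hu' : u' ∈ F)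
    (hur : u.right ≠ 1) (hur' : u'.right ≠ 1) {C C' : UG (Fin n)}
    (hC : (QuotientGroup.mk C : PU (Fin n)) = u.left)
    (hC' : (QuotientGroup.mk C' : PU (Fin n)) = u'.left)
    {A : UG (Fin n)} (hA : inKerm n F (QuotientGroup.mk A)) :
    twistConj C' A = twistConj C A := by
  obtain ⟨D, hD⟩ := QuotientGroup.mk_surjective (u⁻¹ * u').left
  have hinl : inl (QuotientGroup.mk D) = u⁻¹ * u' := by
    conv_rhs => rw [← inl_left_mul_inr_right (u⁻¹ * u')]
    rw [right_inv_mul_eq_one hur hur', map_one, mul_one, hD]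
  have hDF : inl (QuotientGroup.mk D) ∈ F := hinl ▸ F.mul_mem (F.inv_mem hu) hu'
  have hCD : (QuotientGroup.mk (C * conjUG D) : PU (Fin n)) = QuotientGroup.mk C' := by
    rw [hC', ← mul_inv_cancel_left u u', ← hinl, mul_left, actPU_of_ne_one hur, left_inl, ← hC,
      tauPU_mk, QuotientGroup.mk_mul]
  rw [twistConj_eq_of_mk_eq hCD, twistConj_mul_conjUG_of_commute (commute_of_inKerm hA hDF).symm]

end

/-- For an abelian subgroup `F` of `G = PU(n) ⋊ ⟨τ₀⟩` not contained in
`PU(n)` and a fixed `u = ([C], τ₀) ∈ F \ PU(n)`: (i) there is a homomorphism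
`ν : π⁻¹(ker m) → U(1)` with `C Ā C⁻¹ = ν(A) A`, independent of the choice of `u`;
(ii) `π` restricts to an isomorphism `ker ν / ⟨-I⟩ ≅ ker m`. -/
theorem twisted_nu_homomorphism (n : ℕ) (hn : 1 ≤ n)
    (F : Subgroup (GA (Fin n)))
    (habel : ∀ x ∈ F, ∀ y ∈ F, x * y = y * x)
    (u : GA (Fin n)) (hu : u ∈ F) (hur : u.right ≠ 1)
    (C : UG (Fin n)) (hC : (QuotientGroup.mk C : PU (Fin n)) = u.left) :
    ∃ ν : UG (Fin n) → ℂ,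
      (∀ A : UG (Fin n), inKerm n F (QuotientGroup.mk A) →
        ‖ν A‖ = 1 ∧
        (C : Matrix (Fin n) (Fin n) ℂ)
            * ((A : Matrix (Fin n) (Fin n) ℂ).map (starRingEnd ℂ))
            * (C : Matrix (Fin n) (Fin n) ℂ)⁻¹
          = ν A • (A : Matrix (Fin n) (Fin n) ℂ)) ∧
      (∀ A : UG (Fin n), inKerm n F (QuotientGroup.mk A) → ∀ lam : ℂ,
        (C : Matrix (Fin n) (Fin n) ℂ)
            * ((A : Matrix (Fin n) (Fin n) ℂ).map (starRingEnd ℂ))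
            * (C : Matrix (Fin n) (Fin n) ℂ)⁻¹
          = lam • (A : Matrix (Fin n) (Fin n) ℂ) → lam = ν A) ∧
      (∀ A B : UG (Fin n), inKerm n F (QuotientGroup.mk A) →
        inKerm n F (QuotientGroup.mk B) → ν (A * B) = ν A * ν B) ∧
      (∀ u' ∈ F, u'.right ≠ (1 : Multiplicative (ZMod 2)) →
        ∀ C' : UG (Fin n), (QuotientGroup.mk C' : PU (Fin n)) = u'.left →
        ∀ A : UG (Fin n), inKerm n F (QuotientGroup.mk A) →
          (C' : Matrix (Fin n) (Fin n) ℂ)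
              * ((A : Matrix (Fin n) (Fin n) ℂ).map (starRingEnd ℂ))
              * (C' : Matrix (Fin n) (Fin n) ℂ)⁻¹
            = ν A • (A : Matrix (Fin n) (Fin n) ℂ)) ∧
      (∀ x : PU (Fin n), inKerm n F x →
        ∃ A : UG (Fin n), (QuotientGroup.mk A : PU (Fin n)) = x ∧ ν A = 1) ∧
      (∀ A B : UG (Fin n), inKerm n F (QuotientGroup.mk A) →
        inKerm n F (QuotientGroup.mk B) → ν A = 1 → ν B = 1 →
        (QuotientGroup.mk A : PU (Fin n)) = QuotientGroup.mk B →
        (A = B ∨ (A : Matrix (Fin n) (Fin n) ℂ) = -(B : Matrix (Fin n) (Fin n) ℂ))) := by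
  have : Nonempty (Fin n) := ⟨⟨0, hn⟩⟩
  have hex (A : UG (Fin n)) (hA : inKerm n F (QuotientGroup.mk A)) :
      ∃ c : ℂ, ‖c‖ = 1 ∧ (twistConj C A : Matrix (Fin n) (Fin n) ℂ) = c • (A : Matrix _ _ ℂ) :=
    exists_coe_twistConj_eq_smul hur hC (habel u hu _ hA.1)
  have hν (A : UG (Fin n)) (hA : inKerm n F (QuotientGroup.mk A)) :
      ‖nu C A‖ = 1 ∧ (twistConj C A : Matrix (Fin n) (Fin n) ℂ) = nu C A • (A : Matrix _ _ ℂ) := by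
    obtain ⟨c, hc, h⟩ := hex A hA
    rw [nu_eq_of_coe_twistConj_eq_smul h]
    exact ⟨hc, h⟩
  simp only [← coe_twistConj]
  refine ⟨nu C, hν, fun A _ lam h => (nu_eq_of_coe_twistConj_eq_smul h).symm,
    fun A B hA hB => nu_mul (hν A hA).2 (hν B hB).2, ?_, ?_, ?_⟩
  · intro u' hu' hur' C' hC' A hA
    rw [twistConj_eq_of_inKerm hu hu' hur hur' hC hC' hA]
    exact (hν A hA).2
  · intro x hx
    obtain ⟨A, rfl⟩ := QuotientGroup.mk_surjective x
    obtain ⟨c, hc, h⟩ := hex A hx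
    exact exists_mk_eq_and_nu_eq_one hc h
  · intro A B hA hB hνA hνB
    refine eq_or_coe_eq_neg_of_mk_eq (C := C) ?_ ?_
    · rw [(hν A hA).2, hνA, one_smul]
    · rw [(hν B hB).2, hνB, one_smul]
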